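/- (Difference estimate for the truncated generators.) For all integers m ≥ n ≥ 1, every y ∈ ℝ with |y| ≤ r, and every z ∈ ℝ^d, one has |f_m(y,z) − f_n(y,z)| ≤ 2λ‖z‖·1_{{‖z‖ > n}} + 2λ‖z‖·1_{{π_{r+1} > n}} + 2π_{r+1}·1_{{π_{r+1} > n}}. -/

import Mathlib

/-! Both truncations of `z` agree with `z` unless `‖z‖ > n`, and both scaling factors
`c_n = n/(π_{r+1} ∨ n)` are `1` unless `π_{r+1} > n`. Writing `f_m − f_n = (A − B)·c_m + B·(c_m − c_n)` with
`A − B = f(y, q_m z) − f(y, q_n z)`, `|B| ≤ λ‖z‖ + π_{r+1}` and `c_m, c_n ∈ [0, 1]`, the first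
summand is bounded by `2λ‖z‖·1_{‖z‖>n}` and the second by `(λ‖z‖ + π_{r+1})·1_{π_{r+1}>n}`. -/

/-- The truncation `q_n(z) = z · n/(‖z‖ ∨ n)`. -/
noncomputable def trunc {d : ℕ} (n : ℕ) (z : EuclideanSpace ℝ (Fin d)) :
    EuclideanSpace ℝ (Fin d) :=
  ((n : ℝ) / max ‖z‖ (n : ℝ)) • z

section Truncation

variable {d : ℕ}

lemma trunc_eq_self_of_norm_le {n : ℕ} {z : EuclideanSpace ℝ (Fin d)} (hz : ‖z‖ ≤ n) :
    trunc n z = z := by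
  rcases (Nat.cast_nonneg n : (0 : ℝ) ≤ n).eq_or_lt with hn | hn
  · rw [← hn, norm_le_zero_iff] at hz
    simp [trunc, hz]
  · rw [trunc, max_eq_right hz, div_self hn.ne', one_smul]

lemma norm_trunc_le (n : ℕ) (z : EuclideanSpace ℝ (Fin d)) : ‖trunc n z‖ ≤ ‖z‖ := by
  rcases le_or_gt ‖z‖ n with hz | hz
  · rw [trunc_eq_self_of_norm_le hz]
  · have hz0 : 0 < ‖z‖ := (Nat.cast_nonneg n).trans_lt hz
    rw [trunc, norm_smul, max_eq_left hz.le, Real.norm_of_nonneg (by positivity),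
      div_mul_cancel₀ _ hz0.ne']
    exact hz.le

variable {l : ℝ} {g : EuclideanSpace ℝ (Fin d) → ℝ}

lemma abs_sub_at_trunc_le (hl : 0 ≤ l) (hg : ∀ z z', |g z - g z'| ≤ l * ‖z - z'‖) (c : ℝ)
    (n : ℕ) (z : EuclideanSpace ℝ (Fin d)) : |g (trunc n z) - c| ≤ l * ‖z‖ + |g 0 - c| :=
  calc |g (trunc n z) - c| ≤ |g (trunc n z) - g 0| + |g 0 - c| := abs_sub_le _ _ _
    _ ≤ l * ‖z‖ + |g 0 - c| := by
      gcongr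
      simpa using (hg (trunc n z) 0).trans (by gcongr; simpa using norm_trunc_le n z)

lemma abs_sub_trunc_trunc_le (hl : 0 ≤ l) (hg : ∀ z z', |g z - g z'| ≤ l * ‖z - z'‖)
    {m n : ℕ} (hnm : n ≤ m) (z : EuclideanSpace ℝ (Fin d)) :
    |g (trunc m z) - g (trunc n z)| ≤ 2 * l * ‖z‖ * (if (n : ℝ) < ‖z‖ then 1 else 0) := by
  split_ifs with h
  · calc |g (trunc m z) - g (trunc n z)| ≤ l * ‖trunc m z - trunc n z‖ := hg _ _
      _ ≤ l * (‖z‖ + ‖z‖) := by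
        gcongr
        exact (norm_sub_le _ _).trans (add_le_add (norm_trunc_le m z) (norm_trunc_le n z))
      _ = 2 * l * ‖z‖ * 1 := by ring
  · have hzn : ‖z‖ ≤ n := not_lt.mp h
    have hzm : ‖z‖ ≤ m := hzn.trans (by exact_mod_cast hnm)
    simp [trunc_eq_self_of_norm_le hzn, trunc_eq_self_of_norm_le hzm]

end Truncation

lemma abs_div_max_sub_div_max_le {a x y : ℝ} (hx : 0 < x) (hxy : x ≤ y) :
    |y / max a y - x / max a x| ≤ if x < a then 1 else 0 := by
  have hy : 0 < y := hx.trans_le hxy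
  split_ifs with h
  · exact abs_sub_le_of_nonneg_of_le (by positivity)
      (div_le_one_of_le₀ (le_max_right _ _) (hy.le.trans (le_max_right _ _))) (by positivity)
      (div_le_one_of_le₀ (le_max_right _ _) (hx.le.trans (le_max_right _ _)))
  · have hax : a ≤ x := not_lt.mp h
    rw [max_eq_right hax, max_eq_right (hax.trans hxy), div_self hx.ne', div_self hy.ne']
    simp

lemma abs_mul_sub_mul_le {a b c c' : ℝ} (hc0 : 0 ≤ c) (hc1 : c ≤ 1) :
    |a * c - b * c'| ≤ |a - b| + |b| * |c - c'| :=
  calc |a * c - b * c'| = |(a - b) * c + b * (c - c')| := by ring_nf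
    _ ≤ |a - b| * |c| + |b| * |c - c'| := by
      rw [← abs_mul, ← abs_mul]; exact abs_add_le _ _
    _ ≤ |a - b| + |b| * |c - c'| := by
      rw [abs_of_nonneg hc0]; gcongr; exact mul_le_of_le_one_right (abs_nonneg _) hc1

theorem truncated_generator_difference_estimate_general
    (d : ℕ) (l r : ℝ) (hl : 0 ≤ l)
    (f : ℝ → EuclideanSpace ℝ (Fin d) → ℝ)
    (hLip : ∀ y z z', |f y z - f y z'| ≤ l * ‖z - z'‖)
    (π : ℝ)
    (hπ : IsLUB {a : ℝ | ∃ y : ℝ, |y| ≤ r + 1 ∧ a = |f y 0 - f 0 0|} π) :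
    ∀ m n : ℕ, 1 ≤ n → n ≤ m → ∀ y : ℝ, |y| ≤ r →
      ∀ z : EuclideanSpace ℝ (Fin d),
        |((f y (trunc m z) - f 0 0) * ((m : ℝ) / max π (m : ℝ)) + f 0 0) -
            ((f y (trunc n z) - f 0 0) * ((n : ℝ) / max π (n : ℝ)) + f 0 0)| ≤
          2 * l * ‖z‖ * (if (n : ℝ) < ‖z‖ then 1 else 0) +
            2 * l * ‖z‖ * (if (n : ℝ) < π then 1 else 0) +
            2 * π * (if (n : ℝ) < π then 1 else 0) := by
  intro m n hn hnm y hy z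
  have hn0 : (0 : ℝ) < n := by exact_mod_cast hn
  have hnm' : (n : ℝ) ≤ m := by exact_mod_cast hnm
  have hπy : |f y 0 - f 0 0| ≤ π := hπ.1 ⟨y, by linarith, rfl⟩
  have hπ0 : 0 ≤ π := (abs_nonneg _).trans hπy
  have hB := abs_sub_at_trunc_le hl (hLip y) (f 0 0) n z
  have hAB := abs_sub_trunc_trunc_le hl (hLip y) hnm z
  have hC := abs_div_max_sub_div_max_le (a := π) hn0 hnm'
  have hcm := abs_mul_sub_mul_le (a := f y (trunc m z) - f 0 0) (b := f y (trunc n z) - f 0 0)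
    (c' := n / max π n) (by positivity)
    (div_le_one_of_le₀ (le_max_right π (m : ℝ)) (hn0.le.trans (hnm'.trans (le_max_right _ _))))
  rw [add_sub_add_right_eq_sub]
  calc _ ≤ _ := hcm
    _ ≤ 2 * l * ‖z‖ * (if (n : ℝ) < ‖z‖ then 1 else 0) +
          (l * ‖z‖ + π) * (if (n : ℝ) < π then 1 else 0) := by
      rw [sub_sub_sub_cancel_right]
      gcongr
      exact hB.trans (by linarith)
    _ ≤ _ := by
      have : 0 ≤ l * ‖z‖ := by positivity
      split_ifs <;> linarith

/-- difference estimate for the truncated generators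
`f_n(y,z) = (f(y, q_n(z)) − f(0,0))·n/(π_{r+1} ∨ n) + f(0,0)`, where
`π_{r+1} = sup_{|y| ≤ r+1} |f(y,0) − f(0,0)|` is finite: for `m ≥ n ≥ 1` and
`|y| ≤ r`,
`|f_m(y,z) − f_n(y,z)| ≤ 2λ‖z‖·1_{‖z‖>n} + 2λ‖z‖·1_{π_{r+1}>n} + 2π_{r+1}·1_{π_{r+1}>n}`. -/
theorem truncated_generator_difference_estimate
    (d : ℕ) (l r : ℝ) (hl : 0 ≤ l) (hr : 0 ≤ r)
    (f : ℝ → EuclideanSpace ℝ (Fin d) → ℝ)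
    (hLip : ∀ y z z', |f y z - f y z'| ≤ l * ‖z - z'‖)
    (π : ℝ)
    (hπ : IsLUB {a : ℝ | ∃ y : ℝ, |y| ≤ r + 1 ∧ a = |f y 0 - f 0 0|} π) :
    ∀ m n : ℕ, 1 ≤ n → n ≤ m → ∀ y : ℝ, |y| ≤ r →
      ∀ z : EuclideanSpace ℝ (Fin d),
        |((f y (trunc m z) - f 0 0) * ((m : ℝ) / max π (m : ℝ)) + f 0 0) -
            ((f y (trunc n z) - f 0 0) * ((n : ℝ) / max π (n : ℝ)) + f 0 0)| ≤
          2 * l * ‖z‖ * (if (n : ℝ) < ‖z‖ then 1 else 0) +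
            2 * l * ‖z‖ * (if (n : ℝ) < π then 1 else 0) +
            2 * π * (if (n : ℝ) < π then 1 else 0) :=
  truncated_generator_difference_estimate_general d l r hl f hLip π hπ
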